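/- arXiv:0803.1387 — 2 statements merged into one kernel-verified Lean document; each statement's English description precedes it below -/
import Mathlib

section
/- Let f : X → X be a homeomorphism of a locally compact, perfect, separable metric space X. If f is topologically transitive (some two-sided orbit is dense), then there exists a point y whose forward orbit {f^n(y) : n ≥ 0} is dense in X, and there exists a point z whose backward orbit {f^{-n}(z) : n ≥ 0} is dense in X. Moreover, if the full orbit of x is dense, then either the forward orbit of x or the backward orbit of x is dense. -/
/-!
A dense two-sided orbit in a perfect space visits every nonempty open set at infinitely many
times, hence with arbitrarily long gaps; feeding such long returns into the open set
`U ∩ f⁻ᵏ V` turns a backward connection `k < 0` from `U` to `V` into a forward one. Forward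
transitivity gives, by the Baire category theorem and a countable basis, a dense forward orbit
(and likewise for `f⁻¹`). Finally, the closures of the forward and backward orbits of a point
with dense orbit cover the space; if the backward one is not everything, the forward one has
nonempty interior, and forward transitivity spreads it over the whole space.
-/

open Topology Set Function TopologicalSpace

section

variable {X : Type*} [TopologicalSpace X]

def IsForwardTransitive (g : X → X) : Prop :=
  ∀ ⦃U V : Set X⦄, IsOpen U → U.Nonempty → IsOpen V → V.Nonempty →
    ∃ n : ℕ, ∃ a ∈ U, g^[n] a ∈ V

theorem Set.Infinite.exists_le_sub {S : Set ℤ} (hS : S.Infinite) (N : ℤ) :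
    ∃ i ∈ S, ∃ j ∈ S, N ≤ j - i := by
  obtain ⟨i, hi⟩ := hS.nonempty
  obtain ⟨j, hj, hjN⟩ := hS.exists_notMem_finite (finite_Ioo (i - N) (i + N))
  rw [mem_Ioo, not_and_or, not_lt, not_lt] at hjN
  rcases hjN with hji | hij
  · exact ⟨j, hj, i, hi, by omega⟩
  · exact ⟨i, hi, j, hj, by omega⟩

theorem DenseRange.infinite_preimage [T1Space X] [PerfectSpace X] {ι : Type*} {φ : ι → X}
    (hφ : DenseRange φ) {U : Set X} (hU : IsOpen U) (hne : U.Nonempty) :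
    (φ ⁻¹' U).Infinite := by
  intro hfin
  obtain ⟨_, hU', ⟨i, rfl⟩, hi⟩ :=
    (Dense.sdiff_finite hφ (hfin.image φ)).inter_open_nonempty U hU hne
  exact hi (mem_image_of_mem φ hU')

namespace Homeomorph

theorem toEquiv_zpow_natCast_apply (f : X ≃ₜ X) (n : ℕ) (x : X) :
    (f.toEquiv ^ (n : ℤ)) x = f^[n] x := by
  rw [zpow_natCast, ← Equiv.Perm.iterate_eq_pow]
  rfl

theorem toEquiv_zpow_neg_natCast_apply (f : X ≃ₜ X) (n : ℕ) (x : X) :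
    (f.toEquiv ^ (-n : ℤ)) x = f.symm^[n] x := by
  rw [zpow_neg, zpow_natCast, ← inv_pow, ← Equiv.Perm.iterate_eq_pow]
  rfl

theorem continuous_toEquiv_zpow (f : X ≃ₜ X) (n : ℤ) : Continuous ⇑(f.toEquiv ^ n) := by
  rcases Int.eq_nat_or_neg n with ⟨m, rfl | rfl⟩
  · simpa only [funext (toEquiv_zpow_natCast_apply f m)] using f.continuous.iterate m
  · simpa only [funext (toEquiv_zpow_neg_natCast_apply f m)] using f.symm.continuous.iterate m

theorem range_toEquiv_zpow_apply (f : X ≃ₜ X) (x : X) :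
    range (fun n : ℤ => (f.toEquiv ^ n) x) =
      range (fun n : ℕ => f^[n] x) ∪ range (fun n : ℕ => f.symm^[n] x) := by
  ext y
  constructor
  · rintro ⟨n, rfl⟩
    rcases Int.eq_nat_or_neg n with ⟨m, rfl | rfl⟩
    · exact Or.inl ⟨m, (toEquiv_zpow_natCast_apply f m x).symm⟩
    · exact Or.inr ⟨m, (toEquiv_zpow_neg_natCast_apply f m x).symm⟩
  · rintro (⟨m, rfl⟩ | ⟨m, rfl⟩)
    · exact ⟨m, toEquiv_zpow_natCast_apply f m x⟩
    · exact ⟨-m, toEquiv_zpow_neg_natCast_apply f m x⟩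

theorem exists_le_toEquiv_zpow_apply_mem [T1Space X] [PerfectSpace X] (f : X ≃ₜ X) {x : X}
    (hx : Dense (range fun n : ℤ => (f.toEquiv ^ n) x)) {W : Set X} (hW : IsOpen W)
    (hne : W.Nonempty) (N : ℤ) : ∃ p ∈ W, ∃ t : ℤ, N ≤ t ∧ (f.toEquiv ^ t) p ∈ W := by
  obtain ⟨i, hi, j, hj, hij⟩ := (DenseRange.infinite_preimage hx hW hne).exists_le_sub N
  refine ⟨_, hi, j - i, hij, ?_⟩
  rwa [← Equiv.Perm.mul_apply, ← zpow_add, sub_add_cancel]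

theorem isForwardTransitive_of_dense_orbit [T1Space X] [PerfectSpace X] (f : X ≃ₜ X) {x : X}
    (hx : Dense (range fun n : ℤ => (f.toEquiv ^ n) x)) : IsForwardTransitive f := by
  intro U V hU hUne hV hVne
  obtain ⟨_, ⟨i, rfl⟩, hiU⟩ := hx.exists_mem_open hU hUne
  obtain ⟨_, ⟨j, rfl⟩, hjV⟩ := hx.exists_mem_open hV hVne
  set k := j - i
  have hW : IsOpen (U ∩ (f.toEquiv ^ k) ⁻¹' V) :=
    hU.inter (hV.preimage (continuous_toEquiv_zpow f k))
  have hWne : (U ∩ (f.toEquiv ^ k) ⁻¹' V).Nonempty := by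
    refine ⟨_, hiU, ?_⟩
    rwa [mem_preimage, ← Equiv.Perm.mul_apply, ← zpow_add, sub_add_cancel]
  obtain ⟨p, ⟨hpU, -⟩, t, hkt, -, htV⟩ := exists_le_toEquiv_zpow_apply_mem f hx hW hWne (-k)
  obtain ⟨n, hn⟩ := Int.eq_ofNat_of_zero_le (by omega : 0 ≤ k + t)
  refine ⟨n, p, hpU, ?_⟩
  rwa [← toEquiv_zpow_natCast_apply, ← hn, zpow_add, Equiv.Perm.mul_apply]

end Homeomorph

namespace IsForwardTransitive

theorem homeomorph_symm {f : X ≃ₜ X} (hf : IsForwardTransitive f) :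
    IsForwardTransitive f.symm := by
  intro U V hU hUne hV hVne
  obtain ⟨n, a, haV, haU⟩ := hf hV hVne hU hUne
  exact ⟨n, _, haU, by rwa [LeftInverse.iterate f.symm_apply_apply n a]⟩

theorem exists_dense_orbit [BaireSpace X] [SecondCountableTopology X] [Nonempty X]
    {g : X → X} (hg : Continuous g) (ht : IsForwardTransitive g) :
    ∃ y, Dense (range fun n : ℕ => g^[n] y) := by
  have hb := isBasis_countableBasis X
  have hopen : ∀ s ∈ countableBasis X, IsOpen (⋃ n : ℕ, g^[n] ⁻¹' s) := fun s hs =>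
    isOpen_iUnion fun n => (hb.isOpen hs).preimage (hg.iterate n)
  have hdense : ∀ s ∈ countableBasis X, Dense (⋃ n : ℕ, g^[n] ⁻¹' s) := by
    intro s hs
    refine dense_iff_inter_open.2 fun V hV hVne => ?_
    have hsne : s.Nonempty :=
      nonempty_iff_ne_empty.2 (ne_of_mem_of_not_mem hs (empty_notMem_countableBasis X))
    obtain ⟨n, a, haV, ha⟩ := ht hV hVne (hb.isOpen hs) hsne
    exact ⟨a, haV, mem_iUnion.2 ⟨n, ha⟩⟩
  obtain ⟨y, hy⟩ := (dense_biInter_of_isOpen hopen (countable_countableBasis X) hdense).nonempty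
  refine ⟨y, hb.dense_iff.2 fun s hs _ => ?_⟩
  obtain ⟨n, hn⟩ := mem_iUnion.1 (mem_iInter₂.1 hy s hs)
  exact ⟨_, hn, n, rfl⟩

theorem dense_orbit_of_nonempty_interior {g : X → X} (hg : Continuous g)
    (ht : IsForwardTransitive g) {x : X}
    (hx : (interior (closure (range fun n : ℕ => g^[n] x))).Nonempty) :
    Dense (range fun n : ℕ => g^[n] x) := by
  set O := range fun n : ℕ => g^[n] x
  refine dense_iff_inter_open.2 fun V hV hVne => ?_
  obtain ⟨n, a, haU, haV⟩ := ht isOpen_interior hx hV hVne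
  have hmeet : (closure O ∩ (interior (closure O) ∩ g^[n] ⁻¹' V)).Nonempty :=
    ⟨a, interior_subset haU, haU, haV⟩
  obtain ⟨_, ⟨j, rfl⟩, -, hj⟩ := (closure_inter_open_nonempty_iff
    (isOpen_interior.inter (hV.preimage (hg.iterate n)))).1 hmeet
  exact ⟨_, hj, n + j, iterate_add_apply g n j x⟩

theorem dense_forward_or_backward_orbit {f : X ≃ₜ X} (ht : IsForwardTransitive f) {x : X}
    (hx : Dense (range fun n : ℤ => (f.toEquiv ^ n) x)) :
    Dense (range fun n : ℕ => f^[n] x) ∨ Dense (range fun n : ℕ => f.symm^[n] x) := by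
  rw [f.range_toEquiv_zpow_apply, Dense, closure_union] at hx
  by_cases hB : Dense (range fun n : ℕ => f.symm^[n] x)
  · exact Or.inr hB
  refine Or.inl (ht.dense_orbit_of_nonempty_interior f.continuous ?_)
  obtain ⟨y, hy⟩ := not_forall.1 hB
  exact ⟨y, interior_maximal (fun z hz => (hx z).resolve_right hz)
    isClosed_closure.isOpen_compl hy⟩

end IsForwardTransitive

end

/-- On a locally compact, perfect, separable metric space, a topologically transitive
homeomorphism has a point with dense forward orbit and a point with dense backward
orbit; moreover any point with dense full orbit has dense forward or backward orbit. -/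
theorem stmt1 {X : Type*} [MetricSpace X] [LocallyCompactSpace X]
    [SecondCountableTopology X] [PerfectSpace X] (f : X ≃ₜ X)
    (htrans : ∃ x : X, Dense (Set.range fun n : ℤ => (f.toEquiv ^ n) x)) :
    (∃ y : X, Dense (Set.range fun n : ℕ => (⇑f)^[n] y)) ∧
    (∃ z : X, Dense (Set.range fun n : ℕ => (⇑f.symm)^[n] z)) ∧
    ∀ x : X, Dense (Set.range fun n : ℤ => (f.toEquiv ^ n) x) →
      Dense (Set.range fun n : ℕ => (⇑f)^[n] x) ∨
      Dense (Set.range fun n : ℕ => (⇑f.symm)^[n] x) := by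
  obtain ⟨x, hx⟩ := htrans
  have : Nonempty X := ⟨x⟩
  have ht := f.isForwardTransitive_of_dense_orbit hx
  exact ⟨ht.exists_dense_orbit f.continuous,
    ht.homeomorph_symm.exists_dense_orbit f.symm.continuous,
    fun _ => ht.dense_forward_or_backward_orbit⟩
end

section
/- Let X and Y be locally compact, perfect, separable metric spaces and f : X → X, g : Y → Y homeomorphisms. If the product map f × g : X × Y → X × Y is pseudo-minimal, then both (X,f) and (Y,g) are pseudo-minimal, and at least one of them is a minimal system on a compact space. -/
open Topology

/-- A homeomorphism is pseudo-minimal if some nonempty open set consists of points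
with dense (two-sided) orbit. -/
def IsPseudoMinimal {Z : Type*} [TopologicalSpace Z] (h : Z ≃ₜ Z) : Prop :=
  ∃ U : Set Z, IsOpen U ∧ U.Nonempty ∧
    ∀ z ∈ U, Dense (Set.range fun n : ℤ => (h.toEquiv ^ n) z)

/-!
Let `V ×ˢ W` be an open box of points with dense `f × g`-orbit and suppose that neither factor is
a minimal system on a compact space. For `f` this gives a nonempty open set that no finitely many
translates cover, hence a small open `A ⊆ V` with compact closure and points avoiding `A` during
arbitrarily long time windows `[-k, k]`. The first visit to `A` of a nearby point with dense orbit
avoids `A` for `k` steps in one time direction, and by compactness some point of `closure A`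
avoids `A` at all positive times of that direction. If no point avoided `A` in the other
direction, the return times to `A` along that direction would have bounded gaps, forcing `f` to be
compact minimal. So `closure A` contains a forward avoider and a backward avoider of `A`, and
likewise `closure B` for `g` and some `B ⊆ W`. For `η` avoiding `A` forwards and `θ` avoiding `B`
backwards, the orbit of `(η, θ)` must enter `A ×ˢ (B \ {θ})`: impossible at positive times by the
choice of `η`, at negative times by that of `θ`, and at time `0` since `θ ∉ B \ {θ}`.
-/

open Set

namespace Homeomorph
variable {X Y : Type*} [TopologicalSpace X] [TopologicalSpace Y]

theorem toEquiv_zpow (f : X ≃ₜ X) (n : ℤ) : (f ^ n).toEquiv = f.toEquiv ^ n :=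
  map_zpow (⟨⟨toEquiv, rfl⟩, fun _ _ => rfl⟩ : (X ≃ₜ X) →* Equiv.Perm X) f n

theorem prodCongr_zpow (f : X ≃ₜ X) (g : Y ≃ₜ Y) (n : ℤ) :
    f.prodCongr g ^ n = (f ^ n).prodCongr (g ^ n) :=
  (map_zpow (⟨⟨fun p => p.1.prodCongr p.2, rfl⟩, fun _ _ => rfl⟩ :
    (X ≃ₜ X) × (Y ≃ₜ Y) →* (X × Y ≃ₜ X × Y)) (f, g) n).symm

end Homeomorph

theorem exists_add_of_bounded_gaps {S : ℕ → Prop} {m₀ k : ℕ} (h₀ : S m₀)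
    (hgap : ∀ b, S b → ∃ i, 0 < i ∧ i ≤ k ∧ S (b + i)) : ∀ m ≥ m₀, ∃ i ≤ k, S (m + i) := by
  intro m hm
  induction m, hm using Nat.le_induction with
  | base => exact ⟨0, Nat.zero_le _, h₀⟩
  | succ m _ ih =>
    obtain ⟨i, hik, hi⟩ := ih
    rcases i with _ | i
    · obtain ⟨j, hj, hjk, hSj⟩ := hgap m hi
      exact ⟨j - 1, by omega, by rwa [show m + 1 + (j - 1) = m + j by omega]⟩
    · exact ⟨i, by omega, by rwa [show m + 1 + i = m + (i + 1) by omega]⟩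

section Dynamics

variable {X : Type*} [TopologicalSpace X]

def HasDenseOrbit (f : X ≃ₜ X) (x : X) : Prop :=
  Dense (range fun n : ℤ => (f ^ n) x)

def IsCompactMinimal (f : X ≃ₜ X) : Prop :=
  CompactSpace X ∧ ∀ x, HasDenseOrbit f x

def AvoidsUpTo (f : X ≃ₜ X) (A : Set X) (k : ℕ) (x : X) : Prop :=
  ∀ n, 0 < n → n ≤ k → (f ^ n) x ∉ A

def AvoidsForward (f : X ≃ₜ X) (A : Set X) (x : X) : Prop :=
  ∀ n, 0 < n → (f ^ n) x ∉ A

variable {f : X ≃ₜ X} {A : Set X} {x : X}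

theorem hasDenseOrbit_iff_dense_range_toEquiv_zpow :
    HasDenseOrbit f x ↔ Dense (range fun n : ℤ => (f.toEquiv ^ n) x) := by
  simp only [HasDenseOrbit, ← Homeomorph.toEquiv_zpow, Homeomorph.coe_toEquiv]

theorem hasDenseOrbit_zpow_apply_iff (m : ℤ) :
    HasDenseOrbit f ((f ^ m) x) ↔ HasDenseOrbit f x := by
  have h := (Equiv.addRight m).surjective.range_comp fun n : ℤ => (f ^ n) x
  simp only [Function.comp_def, Equiv.coe_addRight, zpow_add, Homeomorph.mul_apply] at h
  rw [HasDenseOrbit, HasDenseOrbit, h]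

theorem hasDenseOrbit_pow_apply_iff (m : ℕ) :
    HasDenseOrbit f ((f ^ m) x) ↔ HasDenseOrbit f x := by
  simpa using hasDenseOrbit_zpow_apply_iff (f := f) (x := x) m

theorem hasDenseOrbit_inv_iff : HasDenseOrbit f⁻¹ x ↔ HasDenseOrbit f x := by
  have h := (Equiv.neg ℤ).surjective.range_comp fun n : ℤ => (f ^ n) x
  simp only [Function.comp_def, Equiv.neg_apply] at h
  simp only [HasDenseOrbit, inv_zpow', h]

theorem isCompactMinimal_inv_iff : IsCompactMinimal f⁻¹ ↔ IsCompactMinimal f := by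
  simp only [IsCompactMinimal, hasDenseOrbit_inv_iff]

theorem HasDenseOrbit.dense_setOf (h : HasDenseOrbit f x) : Dense {y | HasDenseOrbit f y} :=
  h.mono <| range_subset_iff.mpr fun n => (hasDenseOrbit_zpow_apply_iff n).mpr h

theorem HasDenseOrbit.exists_pow_mem (h : HasDenseOrbit f x) (hA : IsOpen A) (hne : A.Nonempty) :
    ∃ n : ℕ, (f ^ n) x ∈ A ∨ (f⁻¹ ^ n) x ∈ A := by
  obtain ⟨_, ⟨n, rfl⟩, hn⟩ := h.exists_mem_open hA hne
  obtain ⟨m, rfl | rfl⟩ := Int.eq_nat_or_neg n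
  · exact ⟨m, Or.inl (by simpa using hn)⟩
  · exact ⟨m, Or.inr (by simpa [inv_pow, ← zpow_natCast] using hn)⟩

section Product

variable {Y : Type*} [TopologicalSpace Y] {g : Y ≃ₜ Y} {y : Y}

theorem HasDenseOrbit.of_prodCongr_left (h : HasDenseOrbit (f.prodCongr g) (x, y)) :
    HasDenseOrbit f x := by
  have : Nonempty Y := ⟨y⟩
  simpa [HasDenseOrbit, ← range_comp, Function.comp_def, Homeomorph.prodCongr_zpow] using
    Prod.fst_surjective.denseRange.dense_image continuous_fst h

theorem HasDenseOrbit.of_prodCongr_right (h : HasDenseOrbit (f.prodCongr g) (x, y)) :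
    HasDenseOrbit g y := by
  have : Nonempty X := ⟨x⟩
  simpa [HasDenseOrbit, ← range_comp, Function.comp_def, Homeomorph.prodCongr_zpow] using
    Prod.snd_surjective.denseRange.dense_image continuous_snd h

end Product

theorem AvoidsUpTo.mono {k j : ℕ} (h : AvoidsUpTo f A k x) (hjk : j ≤ k) : AvoidsUpTo f A j x :=
  fun n hn hnj => h n hn (hnj.trans hjk)

theorem IsCompact.exists_mem_avoidsForward {K : Set X} (hK : IsCompact K) (hA : IsOpen A)
    (h : ∀ k, ∃ x ∈ K, AvoidsUpTo f A k x) : ∃ x ∈ K, AvoidsForward f A x := by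
  obtain ⟨x, hxK, hx⟩ := hK.inter_iInter_nonempty (fun n : ℕ => (f ^ (n + 1)) ⁻¹' Aᶜ)
    (fun n => hA.isClosed_compl.preimage (f ^ (n + 1)).continuous) fun u => by
      obtain ⟨x, hxK, hx⟩ := h (u.sup id + 1)
      refine ⟨x, hxK, mem_iInter₂.mpr fun n hn => hx (n + 1) n.succ_pos ?_⟩
      simpa using Finset.le_sup (f := id) hn
  refine ⟨x, hxK, fun n hn => ?_⟩
  obtain ⟨m, rfl⟩ := Nat.exists_eq_add_of_lt hn
  simpa using mem_iInter.mp hx m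

theorem exists_mem_avoidsUpTo_inv_of_pow_mem {ξ : X} {k t : ℕ} (hξ : ∀ n ≤ k, (f ^ n) ξ ∉ A)
    (ht : (f ^ t) ξ ∈ A) : ∃ η ∈ A, AvoidsUpTo f⁻¹ A k η := by
  classical
  have hex : ∃ t, (f ^ t) ξ ∈ A := ⟨t, ht⟩
  have hk : k < Nat.find hex := lt_of_not_ge fun hle => hξ _ hle (Nat.find_spec hex)
  refine ⟨(f ^ Nat.find hex) ξ, Nat.find_spec hex, fun n hn hnk hmem => ?_⟩
  have hback : f⁻¹ ^ n * f ^ Nat.find hex = f ^ (Nat.find hex - n) := by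
    rw [inv_pow, inv_mul_eq_iff_eq_mul, ← pow_add, Nat.add_sub_cancel' (by omega)]
  rw [← Homeomorph.mul_apply, hback] at hmem
  exact Nat.find_min hex (by omega) hmem

theorem HasDenseOrbit.exists_mem_avoidsUpTo {ξ : X} (hξ : HasDenseOrbit f ξ) (hA : IsOpen A)
    (hne : A.Nonempty) {k : ℕ} (hk : ∀ n ∈ Finset.Icc (-(k : ℤ)) k, (f ^ n) ξ ∉ A) :
    ∃ η ∈ A, AvoidsUpTo f A k η ∨ AvoidsUpTo f⁻¹ A k η := by
  have hfwd : ∀ n ≤ k, (f ^ n) ξ ∉ A := fun n hn => by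
    simpa using hk n (Finset.mem_Icc.mpr ⟨by omega, by omega⟩)
  have hbwd : ∀ n ≤ k, (f⁻¹ ^ n) ξ ∉ A := fun n hn => by
    simpa [inv_pow, ← zpow_natCast] using hk (-n) (Finset.mem_Icc.mpr ⟨by omega, by omega⟩)
  obtain ⟨t, ht | ht⟩ := hξ.exists_pow_mem hA hne
  · obtain ⟨η, hη, h⟩ := exists_mem_avoidsUpTo_inv_of_pow_mem hfwd ht
    exact ⟨η, hη, Or.inr h⟩
  · obtain ⟨η, hη, h⟩ := exists_mem_avoidsUpTo_inv_of_pow_mem hbwd ht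
    exact ⟨η, hη, Or.inl (by rwa [inv_inv] at h)⟩

theorem IsCompact.exists_mem_avoidsForward_or {K : Set X} (hK : IsCompact K) (hA : IsOpen A)
    (hAK : A ⊆ K) (h : ∀ k, ∃ η ∈ A, AvoidsUpTo f A k η ∨ AvoidsUpTo f⁻¹ A k η) :
    ∃ η ∈ K, AvoidsForward f A η ∨ AvoidsForward f⁻¹ A η := by
  by_cases hfwd : ∀ k, ∃ η ∈ K, AvoidsUpTo f A k η
  · obtain ⟨η, hη, hηA⟩ := hK.exists_mem_avoidsForward hA hfwd
    exact ⟨η, hη, Or.inl hηA⟩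
  push Not at hfwd
  obtain ⟨k₀, hk₀⟩ := hfwd
  have hbwd : ∀ k, ∃ η ∈ K, AvoidsUpTo f⁻¹ A k η := fun k => by
    obtain ⟨η, hη, hηA | hηA⟩ := h (max k k₀)
    · exact absurd (hηA.mono (le_max_right k k₀)) (hk₀ η (hAK hη))
    · exact ⟨η, hAK hη, hηA.mono (le_max_left k k₀)⟩
  obtain ⟨η, hη, hηA⟩ := hK.exists_mem_avoidsForward hA hbwd
  exact ⟨η, hη, Or.inr hηA⟩

theorem IsCompact.isCompactMinimal_of_bounded_gaps [T2Space X] {K : Set X} (hK : IsCompact K)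
    (htr : ∀ x ∈ K, HasDenseOrbit f x) {θ : X} {m₀ k : ℕ}
    (h : ∀ m ≥ m₀, ∃ i ≤ k, (f ^ (m + i)) θ ∈ K) : IsCompactMinimal f := by
  set C := ⋃ i ∈ Finset.range (k + 1), (f ^ i) ⁻¹' K
  have hC : IsCompact C :=
    (Finset.range (k + 1)).isCompact_biUnion fun i _ => (f ^ i).isCompact_preimage.mpr hK
  have hθC : ∀ m ≥ m₀, (f ^ m) θ ∈ C := fun m hm => by
    obtain ⟨i, hik, hi⟩ := h m hm
    refine mem_biUnion (Finset.mem_range.mpr (Nat.lt_succ_of_le hik)) ?_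
    rwa [mem_preimage, ← Homeomorph.mul_apply, ← pow_add, add_comm]
  -- A limit `z` of visits of `θ` to `K` has its whole orbit in the closed set `C`, so `C = univ`.
  obtain ⟨z, hzK, hz⟩ := hK.inter_iInter_nonempty (fun n : ℤ => (f ^ n) ⁻¹' C)
      (fun n => hC.isClosed.preimage (f ^ n).continuous) fun u => by
    obtain ⟨i, -, hi⟩ := h (m₀ + u.sup Int.natAbs) le_self_add
    refine ⟨_, hi, mem_iInter₂.mpr fun n hn => ?_⟩
    have hn : n.natAbs ≤ u.sup Int.natAbs := Finset.le_sup hn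
    have hexp : (f ^ n) ((f ^ (m₀ + u.sup Int.natAbs + i)) θ) =
        (f ^ (n + (m₀ + u.sup Int.natAbs + i : ℕ)).toNat) θ := by
      rw [← Homeomorph.mul_apply, ← zpow_natCast, ← zpow_add, ← zpow_natCast,
        Int.toNat_of_nonneg (by omega)]
    rw [mem_preimage, hexp]
    exact hθC _ (by omega)
  have huniv : univ ⊆ C := by
    rw [← (htr z hzK).closure_eq]
    exact closure_minimal (range_subset_iff.mpr (mem_iInter.mp hz)) hC.isClosed
  refine ⟨⟨hC.of_isClosed_subset isClosed_univ huniv⟩, fun y => ?_⟩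
  obtain ⟨i, -, hi⟩ := mem_iUnion₂.mp (huniv (mem_univ y))
  exact (hasDenseOrbit_pow_apply_iff i).mp (htr _ hi)

theorem isCompactMinimal_or_exists_avoidsForward_inv [T2Space X] {B : Set X} (hB : IsOpen B)
    (hBc : IsCompact (closure B)) (htr : ∀ y ∈ closure B, HasDenseOrbit f y) {θ : X}
    (hθ : θ ∈ closure B) (hθB : AvoidsForward f B θ) :
    IsCompactMinimal f ∨ ∃ u ∈ closure B, AvoidsForward f⁻¹ B u := by
  obtain ⟨m₀, hm₀⟩ : ∃ m, (f⁻¹ ^ m) θ ∈ B := by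
    obtain ⟨t, ht | ht⟩ := (htr θ hθ).exists_pow_mem hB (closure_nonempty_iff.mp ⟨θ, hθ⟩)
    · rcases t.eq_zero_or_pos with rfl | ht₀
      · exact ⟨0, by simpa using ht⟩
      · exact absurd ht (hθB t ht₀)
    · exact ⟨t, ht⟩
  by_cases hgap : ∃ k, ∀ b, (f⁻¹ ^ b) θ ∈ B → ∃ i, 0 < i ∧ i ≤ k ∧ (f⁻¹ ^ (b + i)) θ ∈ B
  · obtain ⟨k, hk⟩ := hgap
    left
    rw [← isCompactMinimal_inv_iff]
    refine hBc.isCompactMinimal_of_bounded_gaps (θ := θ) (m₀ := m₀) (k := k)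
      (fun y hy => hasDenseOrbit_inv_iff.mpr (htr y hy)) fun m hm => ?_
    obtain ⟨i, hik, hi⟩ := exists_add_of_bounded_gaps hm₀ hk m hm
    exact ⟨i, hik, subset_closure hi⟩
  · push Not at hgap
    right
    refine hBc.exists_mem_avoidsForward hB fun k => ?_
    obtain ⟨b, hb, hbk⟩ := hgap k
    refine ⟨_, subset_closure hb, fun i hi hik hmem => hbk i hi hik ?_⟩
    rwa [← Homeomorph.mul_apply, ← pow_add, add_comm] at hmem

theorem exists_isOpen_forall_finset_exists_zpow_notMem [WeaklyLocallyCompactSpace X]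
    (hf : ¬IsCompactMinimal f) :
    ∃ A : Set X, IsOpen A ∧ A.Nonempty ∧ ∀ F : Finset ℤ, ∃ x, ∀ n ∈ F, (f ^ n) x ∉ A := by
  contrapose! hf
  refine ⟨?_, fun x => dense_iff_inter_open.mpr fun A hA hne => ?_⟩
  · rcases isEmpty_or_nonempty X with hX | ⟨⟨x₀⟩⟩
    · infer_instance
    obtain ⟨K, hK, hx₀K⟩ := exists_compact_mem_nhds x₀
    obtain ⟨F, hF⟩ := hf (interior K) isOpen_interior ⟨x₀, mem_interior_iff_mem_nhds.mpr hx₀K⟩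
    refine ⟨(F.isCompact_biUnion fun n _ => (f ^ n).isCompact_preimage.mpr hK).of_isClosed_subset
      isClosed_univ fun x _ => ?_⟩
    obtain ⟨n, hn, hx⟩ := hF x
    exact mem_biUnion hn (show (f ^ n) x ∈ K from interior_subset hx)
  · obtain ⟨F, hF⟩ := hf A hA hne
    obtain ⟨n, -, hn⟩ := hF x
    exact ⟨_, hn, n, rfl⟩

theorem HasDenseOrbit.exists_isOpen_avoidsForward_or [LocallyCompactSpace X] [RegularSpace X]
    {U : Set X} {x₀ : X} (hx₀ : HasDenseOrbit f x₀) (hU : IsOpen U) (hx₀U : x₀ ∈ U)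
    (hf : ¬IsCompactMinimal f) :
    ∃ A, IsOpen A ∧ x₀ ∈ A ∧ closure A ⊆ U ∧ IsCompact (closure A) ∧
      ∃ η ∈ closure A, AvoidsForward f A η ∨ AvoidsForward f⁻¹ A η := by
  obtain ⟨A₀, hA₀, hA₀ne, hA₀F⟩ := exists_isOpen_forall_finset_exists_zpow_notMem hf
  obtain ⟨_, ⟨m, rfl⟩, hm⟩ := hx₀.exists_mem_open hA₀ hA₀ne
  obtain ⟨A, hA, hx₀A, hAU, hAc⟩ := exists_open_between_and_isCompact_closure isCompact_singleton
    (hU.inter (hA₀.preimage (f ^ m).continuous)) (singleton_subset_iff.mpr ⟨hx₀U, hm⟩)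
  refine ⟨A, hA, hx₀A rfl, fun x hx => (hAU hx).1, hAc,
    hAc.exists_mem_avoidsForward_or hA subset_closure fun k => ?_⟩
  set F := Finset.Icc (-(k : ℤ)) k
  have hO : IsOpen (⋂ n ∈ F, (f ^ n) ⁻¹' (closure A)ᶜ) :=
    isOpen_biInter_finset fun n _ => isClosed_closure.isOpen_compl.preimage (f ^ n).continuous
  obtain ⟨x, hx⟩ := hA₀F (F.image (m + ·))
  have hxO : x ∈ ⋂ n ∈ F, (f ^ n) ⁻¹' (closure A)ᶜ := mem_iInter₂.mpr fun n hn hxn => by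
    refine hx (m + n) (Finset.mem_image_of_mem _ hn) ?_
    rw [zpow_add, Homeomorph.mul_apply]
    exact (hAU hxn).2
  obtain ⟨ξ, hξ, hξO⟩ := hx₀.dense_setOf.exists_mem_open hO ⟨x, hxO⟩
  exact hξ.exists_mem_avoidsUpTo hA ⟨x₀, hx₀A rfl⟩ fun n hn hmem =>
    mem_iInter₂.mp hξO n hn (subset_closure hmem)

theorem exists_avoidsForward_and_avoidsForward_inv [LocallyCompactSpace X] [T2Space X]
    {U : Set X} (hU : IsOpen U) (hne : U.Nonempty) (htr : ∀ x ∈ U, HasDenseOrbit f x)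
    (hf : ¬IsCompactMinimal f) :
    ∃ A, IsOpen A ∧ A.Nonempty ∧ closure A ⊆ U ∧
      (∃ η ∈ closure A, AvoidsForward f A η) ∧ ∃ η ∈ closure A, AvoidsForward f⁻¹ A η := by
  obtain ⟨x₀, hx₀⟩ := hne
  obtain ⟨A, hA, hx₀A, hAU, hAc, η, hη, hηA⟩ :=
    (htr x₀ hx₀).exists_isOpen_avoidsForward_or hU hx₀ hf
  have htrA : ∀ x ∈ closure A, HasDenseOrbit f x := fun x hx => htr x (hAU hx)
  refine ⟨A, hA, ⟨x₀, hx₀A⟩, hAU, ?_⟩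
  rcases hηA with hηA | hηA
  · exact ⟨⟨η, hη, hηA⟩,
      (isCompactMinimal_or_exists_avoidsForward_inv hA hAc htrA hη hηA).resolve_left hf⟩
  · have h := (isCompactMinimal_or_exists_avoidsForward_inv hA hAc
      (fun x hx => hasDenseOrbit_inv_iff.mpr (htrA x hx)) hη hηA).resolve_left
      (isCompactMinimal_inv_iff.not.mpr hf)
    rw [inv_inv] at h
    exact ⟨h, η, hη, hηA⟩

theorem not_hasDenseOrbit_prodCongr {Y : Type*} [TopologicalSpace Y] [T1Space Y] [PerfectSpace Y]
    {g : Y ≃ₜ Y} {B : Set Y} {y : Y} (hA : IsOpen A) (hAne : A.Nonempty) (hB : IsOpen B)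
    (hBne : B.Nonempty) (hx : AvoidsForward f A x) (hy : AvoidsForward g⁻¹ B y) :
    ¬HasDenseOrbit (f.prodCongr g) (x, y) := fun h => by
  have hBy : (B ∩ {y}ᶜ).Nonempty := (dense_compl_singleton y).inter_open_nonempty B hB hBne
  obtain ⟨_, ⟨n, rfl⟩, hxn, hyn, hny⟩ :=
    h.exists_mem_open (hA.prod (hB.inter isOpen_compl_singleton)) (hAne.prod hBy)
  simp only [Homeomorph.prodCongr_zpow, Homeomorph.coe_prodCongr, Prod.map_apply] at hxn hyn hny
  obtain ⟨m, rfl | rfl⟩ := Int.eq_nat_or_neg n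
  · rcases m.eq_zero_or_pos with rfl | hm
    · exact hny (by simp)
    · exact hx m hm (by simpa using hxn)
  · rcases m.eq_zero_or_pos with rfl | hm
    · exact hny (by simp)
    · exact hy m hm (by simpa [inv_pow, ← zpow_natCast] using hyn)

end Dynamics

theorem stmt5_general {X Y : Type*} [MetricSpace X] [LocallyCompactSpace X] [MetricSpace Y]
    [LocallyCompactSpace Y] [PerfectSpace Y]
    (f : X ≃ₜ X) (g : Y ≃ₜ Y) (hpm : IsPseudoMinimal (f.prodCongr g)) :
    IsPseudoMinimal f ∧ IsPseudoMinimal g ∧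
    ((CompactSpace X ∧ ∀ x : X, Dense (Set.range fun n : ℤ => (f.toEquiv ^ n) x)) ∨
     (CompactSpace Y ∧ ∀ y : Y, Dense (Set.range fun n : ℤ => (g.toEquiv ^ n) y))) := by
  simp only [IsPseudoMinimal, ← hasDenseOrbit_iff_dense_range_toEquiv_zpow] at hpm ⊢
  obtain ⟨U, hU, ⟨⟨x₀, y₀⟩, hz₀⟩, hUtr⟩ := hpm
  obtain ⟨V, W, hV, hW, hx₀, hy₀, hVW⟩ := isOpen_prod_iff.mp hU x₀ y₀ hz₀
  have htr : ∀ x ∈ V, ∀ y ∈ W, HasDenseOrbit (f.prodCongr g) (x, y) :=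
    fun x hx y hy => hUtr _ (hVW ⟨hx, hy⟩)
  have hVtr : ∀ x ∈ V, HasDenseOrbit f x := fun x hx => (htr x hx y₀ hy₀).of_prodCongr_left
  have hWtr : ∀ y ∈ W, HasDenseOrbit g y := fun y hy => (htr x₀ hx₀ y hy).of_prodCongr_right
  refine ⟨⟨V, hV, ⟨x₀, hx₀⟩, hVtr⟩, ⟨W, hW, ⟨y₀, hy₀⟩, hWtr⟩,
    or_iff_not_imp_left.mpr fun hX => by_contra fun hY => ?_⟩
  obtain ⟨A, hA, hAne, hAV, ⟨η, hη, hηA⟩, -⟩ :=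
    exists_avoidsForward_and_avoidsForward_inv hV ⟨x₀, hx₀⟩ hVtr hX
  obtain ⟨B, hB, hBne, hBW, -, θ, hθ, hθB⟩ :=
    exists_avoidsForward_and_avoidsForward_inv hW ⟨y₀, hy₀⟩ hWtr hY
  exact not_hasDenseOrbit_prodCongr hA hAne hB hBne hηA hθB (htr η (hAV hη) θ (hBW hθ))

/-- If the product of two homeomorphisms is pseudo-minimal then both factors are
pseudo-minimal, and at least one factor is a minimal system on a compact space. -/
theorem stmt5 {X Y : Type*} [MetricSpace X] [LocallyCompactSpace X]
    [SecondCountableTopology X] [PerfectSpace X] [MetricSpace Y]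
    [LocallyCompactSpace Y] [SecondCountableTopology Y] [PerfectSpace Y]
    (f : X ≃ₜ X) (g : Y ≃ₜ Y) (hpm : IsPseudoMinimal (f.prodCongr g)) :
    IsPseudoMinimal f ∧ IsPseudoMinimal g ∧
    ((CompactSpace X ∧ ∀ x : X, Dense (Set.range fun n : ℤ => (f.toEquiv ^ n) x)) ∨
     (CompactSpace Y ∧ ∀ y : Y, Dense (Set.range fun n : ℤ => (g.toEquiv ^ n) y))) :=
  stmt5_general f g hpm
end
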